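/- arXiv:2302.02895 — 2 statements merged into one kernel-verified Lean document; each statement's English description precedes it below -/
import Mathlib

section
/- Let G be a finite connected graph on V, f, g : V → ℝ, and p a balanced probability distribution on V. With W_f and W_g the minimax path matrices of f and g, for every v, w ∈ V there exists a vertex u ∈ V such that |W_f(v,w) − W_g(v,w)| · (p(v)·p(w))^{1/q} ≤ |f(u) − g(u)| · p(u)^{1/q}. -/
/-!
Fix a walk `P` from `v` to `w` that is optimal for `g`. The maximum of `f` along `P` is attained
at some vertex `u` of `P`, so `W_f(v,w) ≤ f(u)`, while `g(u) ≤ W_g(v,w)` because `u` lies on `P`.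
Hence `W_f(v,w) - W_g(v,w) ≤ f(u) - g(u)`, and symmetrically with `f` and `g` swapped. The weights
only enter through `p(v)·p(w) ≤ p(u)` and the monotonicity of `t ↦ t^(1/q)`.
-/

open Finset

/-- The maximum value of `f` along the support of a walk. -/
def walkMax {V : Type*} (G : SimpleGraph V) (f : V → ℝ) {v w : V}
    (p : G.Walk v w) : ℝ :=
  p.support.foldr (fun u r => max (f u) r) (f v)

/-- The minimax path matrix `W_f(v,w)`: the minimum over edge paths from `v`
to `w` of the maximum `f`-value along the path. -/
noncomputable def minimaxW {V : Type*} (G : SimpleGraph V) (f : V → ℝ)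
    (v w : V) : ℝ :=
  sInf {x | ∃ p : G.Walk v w, x = walkMax G f p}

namespace List

variable {α β : Type*} [LinearOrder β] (f : α → β) (a : β)

theorem le_foldr_max_of_mem {l : List α} {u : α} (hu : u ∈ l) :
    f u ≤ l.foldr (fun u r => max (f u) r) a := by
  induction l with
  | nil => cases hu
  | cons x l ih =>
    rcases List.mem_cons.mp hu with rfl | hu
    · exact le_max_left _ _
    · exact (ih hu).trans (le_max_right _ _)

theorem foldr_max_eq_init_or_exists_mem (l : List α) :
    l.foldr (fun u r => max (f u) r) a = a ∨
      ∃ u ∈ l, l.foldr (fun u r => max (f u) r) a = f u := by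
  induction l with
  | nil => exact Or.inl rfl
  | cons x l ih =>
    rcases le_total (f x) (l.foldr (fun u r => max (f u) r) a) with h | h
    · simp only [List.foldr_cons, max_eq_right h]
      exact ih.imp_right fun ⟨u, hu, hmax⟩ => ⟨u, List.mem_cons_of_mem _ hu, hmax⟩
    · simp only [List.foldr_cons, max_eq_left h]
      exact Or.inr ⟨x, List.mem_cons_self, rfl⟩

end List

namespace SimpleGraph

variable {V : Type*} {G : SimpleGraph V} (f g : V → ℝ) {v w : V}

theorem le_walkMax_of_mem_support {P : G.Walk v w} {u : V} (hu : u ∈ P.support) :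
    f u ≤ walkMax G f P :=
  List.le_foldr_max_of_mem f _ hu

theorem exists_mem_support_walkMax_eq (P : G.Walk v w) :
    ∃ u ∈ P.support, walkMax G f P = f u :=
  (List.foldr_max_eq_init_or_exists_mem f (f v) P.support).elim
    (fun h => ⟨v, P.start_mem_support, h⟩) id

theorem walkMax_set_subset_range (v w : V) :
    {x | ∃ P : G.Walk v w, x = walkMax G f P} ⊆ Set.range f := by
  rintro x ⟨P, rfl⟩
  obtain ⟨u, -, hu⟩ := exists_mem_support_walkMax_eq f P
  exact ⟨u, hu.symm⟩

variable [Finite V]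

theorem minimaxW_le_walkMax (P : G.Walk v w) : minimaxW G f v w ≤ walkMax G f P :=
  csInf_le ((Set.finite_range f).bddBelow.mono (walkMax_set_subset_range f v w)) ⟨P, rfl⟩

theorem exists_walkMax_eq_minimaxW (h : G.Reachable v w) :
    ∃ P : G.Walk v w, walkMax G f P = minimaxW G f v w := by
  obtain ⟨P⟩ := h
  have hne : {x | ∃ Q : G.Walk v w, x = walkMax G f Q}.Nonempty := ⟨_, P, rfl⟩
  obtain ⟨Q, hQ⟩ := hne.csInf_mem ((Set.finite_range f).subset (walkMax_set_subset_range f v w))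
  exact ⟨Q, hQ.symm⟩

theorem exists_minimaxW_sub_le (h : G.Reachable v w) :
    ∃ u, minimaxW G f v w - minimaxW G g v w ≤ f u - g u := by
  obtain ⟨P, hP⟩ := exists_walkMax_eq_minimaxW g h
  obtain ⟨u, hu, hfu⟩ := exists_mem_support_walkMax_eq f P
  have hf : minimaxW G f v w ≤ f u := hfu ▸ minimaxW_le_walkMax f P
  have hg : g u ≤ minimaxW G g v w := hP ▸ le_walkMax_of_mem_support g hu
  exact ⟨u, by linarith⟩

theorem exists_abs_minimaxW_sub_le (h : G.Reachable v w) :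
    ∃ u, |minimaxW G f v w - minimaxW G g v w| ≤ |f u - g u| := by
  rcases le_total (minimaxW G g v w) (minimaxW G f v w) with hle | hle
  · obtain ⟨u, hu⟩ := exists_minimaxW_sub_le f g h
    exact ⟨u, (abs_of_nonneg (sub_nonneg.mpr hle)).trans_le (hu.trans (le_abs_self _))⟩
  · obtain ⟨u, hu⟩ := exists_minimaxW_sub_le g f h
    refine ⟨u, ?_⟩
    rw [abs_sub_comm, abs_of_nonneg (sub_nonneg.mpr hle), abs_sub_comm]
    exact hu.trans (le_abs_self _)

end SimpleGraph

theorem minimaxW_weighted_pointwise_bound_general {V : Type*} [Fintype V]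
    (G : SimpleGraph V) (hG : G.Connected) (f g : V → ℝ) (q : ℝ) (hq : 1 ≤ q)
    (p : V → ℝ) (hp : ∀ v, 0 ≤ p v)
    (hbal : ∀ a b c : V, p a * p b ≤ p c) :
    ∀ v w : V, ∃ u : V,
      |minimaxW G f v w - minimaxW G g v w| * (p v * p w) ^ (1 / q) ≤
        |f u - g u| * p u ^ (1 / q) := by
  intro v w
  obtain ⟨u, hu⟩ := SimpleGraph.exists_abs_minimaxW_sub_le f g (hG.preconnected v w)
  have hpvw : 0 ≤ p v * p w := mul_nonneg (hp v) (hp w)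
  have hweight : (p v * p w) ^ (1 / q) ≤ p u ^ (1 / q) :=
    Real.rpow_le_rpow hpvw (hbal v w u) (one_div_nonneg.mpr (zero_le_one.trans hq))
  exact ⟨u, mul_le_mul hu hweight (Real.rpow_nonneg hpvw _) (abs_nonneg _)⟩

/-- for a balanced probability distribution `p`, the weighted
difference of minimax matrices is dominated at some vertex `u`. -/
theorem minimaxW_weighted_pointwise_bound {V : Type*} [Fintype V] [Nonempty V]
    (G : SimpleGraph V) (hG : G.Connected) (f g : V → ℝ) (q : ℝ) (hq : 1 ≤ q)
    (p : V → ℝ) (hp : ∀ v, 0 ≤ p v) (hsum : ∑ v, p v = 1)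
    (hbal : ∀ a b c : V, p a * p b ≤ p c) :
    ∀ v w : V, ∃ u : V,
      |minimaxW G f v w - minimaxW G g v w| * (p v * p w) ^ (1 / q) ≤
        |f u - g u| * p u ^ (1 / q) :=
  minimaxW_weighted_pointwise_bound_general G hG f g q hq p hp hbal
end

section
/- Let G be a finite connected graph on a vertex set V of cardinality n, let f, g : V → ℝ, and let p be a balanced probability distribution on V. Then the weighted L^q distance between the minimax path matrices satisfies (∑_{v,w} |W_f(v,w) − W_g(v,w)|^q p(v)p(w))^{1/q} ≤ n^{2/q} · (∑_u |f(u) − g(u)|^q p(u))^{1/q}. -/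
open Finset

/-!
`W_f` is `1`-Lipschitz in `f` for the sup norm, because `walkMax` is; as `p ⊗ p` is a probability
distribution, the weighted `L^q` norm of `W_f - W_g` is therefore at most `max_u |f u - g u|`.
Balance forces `p c ≥ 1 / n²` for every `c` (some `a` has `p a ≥ 1 / n`, and `p c ≥ p a * p a`),
so `max_u |f u - g u| ^ q ≤ n² ∑_u |f u - g u| ^ q p u`.
-/

section Minimax

variable {V : Type*} (G : SimpleGraph V) {f g : V → ℝ} {v w : V}

lemma le_walkMax (f : V → ℝ) (P : G.Walk v w) : f v ≤ walkMax G f P := by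
  unfold walkMax
  induction P.support with
  | nil => exact le_rfl
  | cons u l ih => exact ih.trans (le_max_right _ _)

lemma walkMax_le_walkMax_add {M : ℝ} (h : ∀ u, f u ≤ g u + M) (P : G.Walk v w) :
    walkMax G f P ≤ walkMax G g P + M := by
  unfold walkMax
  induction P.support with
  | nil => exact h v
  | cons u l ih => simpa only [List.foldr_cons, max_add_add_right] using max_le_max (h u) ih

lemma minimaxW_le_minimaxW_add {M : ℝ} (hvw : G.Reachable v w) (h : ∀ u, f u ≤ g u + M) :
    minimaxW G f v w ≤ minimaxW G g v w + M := by
  obtain ⟨P₀⟩ := hvw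
  have hbdd : BddBelow {x | ∃ P : G.Walk v w, x = walkMax G f P} :=
    ⟨f v, by rintro _ ⟨P, rfl⟩; exact le_walkMax G f P⟩
  rw [minimaxW, minimaxW, ← sub_le_iff_le_add]
  refine le_csInf ⟨_, P₀, rfl⟩ ?_
  rintro _ ⟨P, rfl⟩
  rw [sub_le_iff_le_add]
  exact (csInf_le hbdd ⟨P, rfl⟩).trans (walkMax_le_walkMax_add G h P)

lemma abs_minimaxW_sub_minimaxW_le {M : ℝ} (hvw : G.Reachable v w)
    (h : ∀ u, |f u - g u| ≤ M) : |minimaxW G f v w - minimaxW G g v w| ≤ M := by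
  rw [abs_sub_le_iff, sub_le_iff_le_add', sub_le_iff_le_add']
  exact ⟨minimaxW_le_minimaxW_add G hvw fun u => sub_le_iff_le_add'.mp (abs_sub_le_iff.mp (h u)).1,
    minimaxW_le_minimaxW_add G hvw fun u => sub_le_iff_le_add'.mp (abs_sub_le_iff.mp (h u)).2⟩

end Minimax

section Distribution

variable {V : Type*} [Fintype V] {p : V → ℝ}

lemma sum_sum_mul_mul_le_of_le {F : V → V → ℝ} {C : ℝ} (hF : ∀ v w, F v w ≤ C)
    (hp : ∀ v, 0 ≤ p v) (hsum : ∑ v, p v = 1) :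
    ∑ v, ∑ w, F v w * (p v * p w) ≤ C :=
  calc ∑ v, ∑ w, F v w * (p v * p w)
      ≤ ∑ v, ∑ w, C * (p v * p w) := by
        gcongr with v _ w _
        · exact mul_nonneg (hp v) (hp w)
        · exact hF v w
    _ = C * ((∑ v, p v) * ∑ w, p w) := by simp_rw [sum_mul_sum, mul_sum]
    _ = C := by rw [hsum, mul_one, mul_one]

lemma exists_inv_card_le_of_sum_eq_one (hsum : ∑ v, p v = 1) :
    ∃ a, (Fintype.card V : ℝ)⁻¹ ≤ p a := by
  have hne : (univ : Finset V).Nonempty := nonempty_of_sum_ne_zero (hsum ▸ one_ne_zero)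
  have hcard : (Fintype.card V : ℝ) ≠ 0 := by exact_mod_cast hne.card_pos.ne'
  obtain ⟨a, -, ha⟩ := exists_le_of_sum_le (f := fun _ => (Fintype.card V : ℝ)⁻¹) (g := p) hne
    (by simp [hsum, hcard])
  exact ⟨a, ha⟩

lemma inv_card_sq_le_of_balanced (hsum : ∑ v, p v = 1) (hbal : ∀ a b c : V, p a * p b ≤ p c)
    (c : V) : ((Fintype.card V : ℝ) ^ 2)⁻¹ ≤ p c := by
  obtain ⟨a, ha⟩ := exists_inv_card_le_of_sum_eq_one hsum
  calc ((Fintype.card V : ℝ) ^ 2)⁻¹ = (Fintype.card V : ℝ)⁻¹ * (Fintype.card V : ℝ)⁻¹ := by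
        rw [sq, mul_inv]
    _ ≤ p a * p a := mul_self_le_mul_self (by positivity) ha
    _ ≤ p c := hbal a a c

lemma le_card_sq_mul_sum_mul_of_balanced {F : V → ℝ} (hF : ∀ v, 0 ≤ F v) (hp : ∀ v, 0 ≤ p v)
    (hsum : ∑ v, p v = 1) (hbal : ∀ a b c : V, p a * p b ≤ p c) (u : V) :
    F u ≤ (Fintype.card V : ℝ) ^ 2 * ∑ v, F v * p v := by
  have hcard : (Fintype.card V : ℝ) ≠ 0 := by exact_mod_cast (Fintype.card_pos_iff.mpr ⟨u⟩).ne'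
  calc F u = (Fintype.card V : ℝ) ^ 2 * (F u * ((Fintype.card V : ℝ) ^ 2)⁻¹) := by
        field_simp
    _ ≤ (Fintype.card V : ℝ) ^ 2 * (F u * p u) := by
        gcongr
        · exact hF u
        · exact inv_card_sq_le_of_balanced hsum hbal u
    _ ≤ (Fintype.card V : ℝ) ^ 2 * ∑ v, F v * p v := by
        gcongr
        exact single_le_sum (fun v _ => mul_nonneg (hF v) (hp v)) (mem_univ u)

end Distribution

theorem minimaxW_Lq_stability_balanced_general {V : Type*} [Fintype V]
    (G : SimpleGraph V) (hG : G.Connected) (f g : V → ℝ) (q : ℝ) (hq : 1 ≤ q)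
    (p : V → ℝ) (hp : ∀ v, 0 ≤ p v) (hsum : ∑ v, p v = 1)
    (hbal : ∀ a b c : V, p a * p b ≤ p c) :
    (∑ v, ∑ w, |minimaxW G f v w - minimaxW G g v w| ^ q * (p v * p w)) ^ (1 / q) ≤
      (Fintype.card V : ℝ) ^ ((2 : ℝ) / q) *
        (∑ u, |f u - g u| ^ q * p u) ^ (1 / q) := by
  have hq₀ : 0 < q := by linarith
  set S := ∑ u, |f u - g u| ^ q * p u
  have hS : 0 ≤ S := sum_nonneg fun u _ => mul_nonneg (by positivity) (hp u)
  have hdiff (u : V) : |f u - g u| ≤ ((Fintype.card V : ℝ) ^ 2 * S) ^ (1 / q) := by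
    rw [one_div, Real.le_rpow_inv_iff_of_pos (abs_nonneg _) (by positivity) hq₀]
    exact le_card_sq_mul_sum_mul_of_balanced (F := fun u => |f u - g u| ^ q)
      (fun _ => by positivity) hp hsum hbal u
  have hW (v w : V) : |minimaxW G f v w - minimaxW G g v w| ^ q ≤ (Fintype.card V : ℝ) ^ 2 * S := by
    rw [← Real.le_rpow_inv_iff_of_pos (abs_nonneg _) (by positivity) hq₀, ← one_div]
    exact abs_minimaxW_sub_minimaxW_le G (hG.preconnected v w) hdiff
  calc (∑ v, ∑ w, |minimaxW G f v w - minimaxW G g v w| ^ q * (p v * p w)) ^ (1 / q)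
      ≤ ((Fintype.card V : ℝ) ^ 2 * S) ^ (1 / q) := by
        refine Real.rpow_le_rpow ?_ (sum_sum_mul_mul_le_of_le hW hp hsum) (by positivity)
        exact sum_nonneg fun v _ => sum_nonneg fun w _ =>
          mul_nonneg (by positivity) (mul_nonneg (hp v) (hp w))
    _ = (Fintype.card V : ℝ) ^ ((2 : ℝ) / q) * S ^ (1 / q) := by
        rw [Real.mul_rpow (by positivity) hS, ← Real.rpow_natCast, ← Real.rpow_mul (by positivity)]
        ring_nf

/-- GW-type stability bound for balanced distributions with
constant `n^{2/q}`. -/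
theorem minimaxW_Lq_stability_balanced {V : Type*} [Fintype V] [Nonempty V]
    (G : SimpleGraph V) (hG : G.Connected) (f g : V → ℝ) (q : ℝ) (hq : 1 ≤ q)
    (p : V → ℝ) (hp : ∀ v, 0 ≤ p v) (hsum : ∑ v, p v = 1)
    (hbal : ∀ a b c : V, p a * p b ≤ p c) :
    (∑ v, ∑ w, |minimaxW G f v w - minimaxW G g v w| ^ q * (p v * p w)) ^ (1 / q) ≤
      (Fintype.card V : ℝ) ^ ((2 : ℝ) / q) *
        (∑ u, |f u - g u| ^ q * p u) ^ (1 / q) :=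
  minimaxW_Lq_stability_balanced_general G hG f g q hq p hp hsum hbal
end
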